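/- Let k ≥ 1, n ≥ 1, and let ω = (ω₁, ω₂, …) be a sequence of integers. Let H₊ be the n×n Hessenberg matrix over ℤ[t₁,…,t_k] with entries (H₊)_{i,j} = t_{i−j+1} for 1 ≤ j ≤ i ≤ n−1, (H₊)_{i,i+1} = +1 for 1 ≤ i ≤ n−1, (H₊)_{n,j} = ω_{n−j+1}·t_{n−j+1} for 1 ≤ j ≤ n, and all other entries 0. Then perm H₊ = P_{ω,k,n}, where the permanent of an n×n matrix (a_{i,j}) is Σ_{σ ∈ Sₙ} Π_{i=1}^n a_{i,σ(i)}. -/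

import Mathlib

open Finset MvPolynomial

/-- The set of partitions `α ⊢ n` with parts at most `k`, encoded as tuples
`α = (α₁, …, α_k) ∈ ℕ^k` (0-indexed) with `∑ j, (j+1)·α_j = n`. -/
def partitions (k n : ℕ) : Finset (Fin k → ℕ) :=
  (Fintype.piFinset fun _ : Fin k => Finset.range (n + 1)).filter
    fun α => ∑ j : Fin k, (j.1 + 1) * α j = n

/-- The variable `t_{m+1}` of `ℚ[t₁,…,t_k]` (0-indexed), with the convention
`t_j = 0` for `j > k`. -/
noncomputable def tQ (k m : ℕ) : MvPolynomial (Fin k) ℚ :=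
  if h : m < k then X ⟨m, h⟩ else 0

/-- The weighted isobaric polynomial with weight vector `ω` (0-indexed, so
`ω 0 = ω₁`): `P_{ω,k,n} = ∑_{α ⊢ n} (|α|!/(α₁!⋯α_k!))·((∑ᵢ αᵢωᵢ)/|α|)·t^α`.
Its coefficients are integers; it is written here in `ℚ[t₁,…,t_k]`. -/
noncomputable def P (k : ℕ) (ω : ℕ → ℤ) (n : ℕ) : MvPolynomial (Fin k) ℚ :=
  ∑ α ∈ partitions k n,
    C ((Nat.multinomial Finset.univ α : ℚ) *
        ((∑ i : Fin k, (α i : ℚ) * (ω i.1 : ℚ)) / ((∑ i, α i : ℕ) : ℚ))) *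
      ∏ j, X j ^ α j

/-- The permanent of an `n×n` matrix: `∑_{σ ∈ Sₙ} ∏ᵢ a_{i,σ(i)}`. -/
noncomputable def perm {n : ℕ} {R : Type*} [CommRing R] (M : Matrix (Fin n) (Fin n) R) : R :=
  ∑ σ : Equiv.Perm (Fin n), ∏ i, M i (σ i)

/-- The `n×n` Hessenberg matrix `H₊` (0-indexed): rows `1 ≤ i ≤ n-1` (1-based)
have `t_{i-j+1}` for `j ≤ i` and `+1` on the superdiagonal; the last row has
entries `ω_{n-j+1}·t_{n-j+1}`; all other entries are `0`. -/
noncomputable def Hplus (k n : ℕ) (ω : ℕ → ℤ) :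
    Matrix (Fin n) (Fin n) (MvPolynomial (Fin k) ℚ) :=
  fun i j =>
    if i.1 = n - 1 then
      if j.1 ≤ i.1 then C ((ω (i.1 - j.1) : ℚ)) * tQ k (i.1 - j.1) else 0
    else if j.1 ≤ i.1 then tQ k (i.1 - j.1)
    else if j.1 = i.1 + 1 then 1
    else 0

/-!
Reversing the order of rows and columns turns `H₊` into an upper Hessenberg matrix with `1`s on
the subdiagonal, Toeplitz entries `t_{j-i+1}` on and above the diagonal, and the weighted entries
`ω_{j+1} t_{j+1}` in its first row. Expanding the permanent along the first column gives
`perm H₊ = ∑_r ω_{r+1} t_{r+1} H_{n-1-r}`, where `H_m` is the permanent of the unweighted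
`m × m` matrix; `H_m = ∑_{α ⊢ m} (|α|!/∏ α_i!) t^α` because both sides satisfy
`H_{m+1} = ∑_r t_{r+1} H_{m-r}`. On the other side, the identity
`multinomial(α) · α_r / |α| = multinomial(α - e_r)` splits `P_{ω,k,n}` into the same sum.
-/

theorem perm_eq_permanent {n : ℕ} {R : Type*} [CommRing R] (M : Matrix (Fin n) (Fin n) R) :
    perm M = M.permanent :=
  M.permanent_transpose

namespace Matrix

variable {R : Type*} [CommSemiring R]

theorem permanent_succ_column_zero {n : ℕ} (A : Matrix (Fin (n + 1)) (Fin (n + 1)) R) :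
    A.permanent = ∑ i, A i 0 * (A.submatrix i.succAbove Fin.succ).permanent := by
  rw [permanent, Finset.univ_perm_fin_succ, ← Finset.univ_product_univ, Finset.sum_map,
    Finset.sum_product]
  refine Finset.sum_congr rfl fun p _ => ?_
  simp only [Equiv.toEmbedding_apply, Fin.prod_univ_succ, Equiv.Perm.decomposeFin_symm_apply_zero,
    Equiv.Perm.decomposeFin_symm_apply_succ, permanent, Finset.mul_sum, submatrix_apply]
  refine Fin.cases ?_ (fun q => ?_) p
  · simp
  · simp_rw [← Fin.succAbove_cycleRange]
    exact (Group.mulLeft_bijective q.cycleRange).sum_comp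
      fun τ => A q.succ 0 * ∏ i, A (q.succ.succAbove (τ i)) i.succ

theorem permanent_submatrix_rev {n : ℕ} (M : Matrix (Fin n) (Fin n) R) :
    (M.submatrix Fin.rev Fin.rev).permanent = M.permanent :=
  calc (M.submatrix Fin.rev Fin.rev).permanent
      = ((M.submatrix Fin.revPerm id).submatrix id Fin.revPerm).permanent := rfl
    _ = M.permanent := by rw [permanent_permute_rows, permanent_permute_cols]

end Matrix

section Hessenberg

variable {R : Type*} [CommSemiring R] (a c : ℕ → R)

def toeplitzHessenberg (m : ℕ) : Matrix (Fin m) (Fin m) R :=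
  Matrix.of fun i j =>
    if i.1 = 0 then c j else if i ≤ j then a (j - i) else if i.1 = j + 1 then 1 else 0

theorem toeplitzHessenberg_submatrix_succ_succ (m : ℕ) :
    (toeplitzHessenberg a c (m + 1)).submatrix Fin.succ Fin.succ = toeplitzHessenberg a a m := by
  ext i j
  simp only [toeplitzHessenberg, Matrix.submatrix_apply, Matrix.of_apply, Fin.val_succ,
    Fin.succ_le_succ_iff]
  split_ifs <;> first | rfl | omega | simp_all

theorem toeplitzHessenberg_submatrix_one_succ (m : ℕ) :
    (toeplitzHessenberg a c (m + 2)).submatrix (1 : Fin (m + 2)).succAbove Fin.succ =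
      toeplitzHessenberg a (fun j => c (j + 1)) (m + 1) := by
  ext i j
  refine Fin.cases ?_ (fun i => ?_) i
  · simp [toeplitzHessenberg]
  · simp only [toeplitzHessenberg, Matrix.submatrix_apply, Matrix.of_apply, Fin.val_succ,
      Fin.one_succAbove_succ, Fin.succ_le_succ_iff]
    split_ifs <;> first | rfl | omega | simp_all

theorem permanent_toeplitzHessenberg_succ_succ (m : ℕ) :
    (toeplitzHessenberg a c (m + 2)).permanent =
      c 0 * (toeplitzHessenberg a a (m + 1)).permanent +
        (toeplitzHessenberg a (fun j => c (j + 1)) (m + 1)).permanent := by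
  rw [Matrix.permanent_succ_column_zero, Fin.sum_univ_succ, Fin.sum_univ_succ,
    Fin.succAbove_zero, toeplitzHessenberg_submatrix_succ_succ, Fin.succ_zero_eq_one,
    toeplitzHessenberg_submatrix_one_succ]
  simp [toeplitzHessenberg]

theorem permanent_toeplitzHessenberg_succ (m : ℕ) :
    (toeplitzHessenberg a c (m + 1)).permanent =
      ∑ r ∈ range (m + 1), c r * (toeplitzHessenberg a a (m - r)).permanent := by
  induction m generalizing c with
  | zero => simp [toeplitzHessenberg, Matrix.permanent_isEmpty]
  | succ m ih =>
    rw [permanent_toeplitzHessenberg_succ_succ, ih fun j => c (j + 1), sum_range_succ' _ (m + 1),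
      add_comm]
    congr 1
    refine sum_congr rfl fun r _ => ?_
    rw [Nat.add_sub_add_right]

end Hessenberg

theorem Hplus_submatrix_rev (k n : ℕ) (ω : ℕ → ℤ) :
    (Hplus k n ω).submatrix Fin.rev Fin.rev =
      toeplitzHessenberg (tQ k) (fun j => C (ω j : ℚ) * tQ k j) n := by
  ext i j : 1
  simp only [Hplus, toeplitzHessenberg, Matrix.submatrix_apply, Matrix.of_apply, Fin.val_rev,
    Fin.le_def]
  split_ifs <;> first | rfl | omega | grind

open Nat in
theorem Nat.succ_mul_multinomial_add_single {ι : Type*} [DecidableEq ι] {s : Finset ι}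
    {a : ι} (ha : a ∈ s) (f : ι → ℕ) :
    (f a + 1) * Nat.multinomial s (f + Pi.single a 1 : ι → ℕ) =
      (∑ i ∈ s, f i + 1) * Nat.multinomial s f := by
  have hfact : ∏ i ∈ s, ((f + Pi.single a 1 : ι → ℕ) i)! = (f a + 1) * ∏ i ∈ s, (f i)! := by
    have hi : ∀ i, ((f + Pi.single a 1 : ι → ℕ) i)! = (f i)! * if i = a then f a + 1 else 1 := by
      intro i
      by_cases h : i = a
      · subst h; simp [Nat.factorial_succ, mul_comm]
      · simp [h]
    rw [prod_congr rfl fun i _ => hi i, prod_mul_distrib, prod_ite_eq' s a, if_pos ha, mul_comm]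
  have hsum : ∑ i ∈ s, (f + Pi.single a 1 : ι → ℕ) i = ∑ i ∈ s, f i + 1 := by
    simp [sum_add_distrib, ha]
  have hspec := Nat.multinomial_spec s (f + Pi.single a 1 : ι → ℕ)
  rw [hfact, hsum, Nat.factorial_succ, ← Nat.multinomial_spec s f] at hspec
  refine Nat.eq_of_mul_eq_mul_left (s.prod_pos fun i _ => Nat.factorial_pos (f i)) ?_
  linarith

theorem mem_partitions {k n : ℕ} {α : Fin k → ℕ} :
    α ∈ partitions k n ↔ ∑ j : Fin k, (j.1 + 1) * α j = n := by
  refine ⟨fun h => (mem_filter.mp h).2, fun h => mem_filter.mpr ⟨?_, h⟩⟩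
  refine Fintype.mem_piFinset.mpr fun i => mem_range.mpr (Nat.lt_succ_of_le ?_)
  calc α i ≤ (i.1 + 1) * α i := Nat.le_mul_of_pos_left _ i.1.succ_pos
    _ ≤ n := h ▸ single_le_sum (f := fun j : Fin k => (j.1 + 1) * α j)
        (fun _ _ => Nat.zero_le _) (mem_univ i)

theorem apply_eq_zero_of_mem_partitions {k n : ℕ} {α : Fin k → ℕ} (hα : α ∈ partitions k n)
    {r : Fin k} (hr : n ≤ r) : α r = 0 := by
  by_contra h
  have : (r.1 + 1) * α r ≤ n := mem_partitions.mp hα ▸ single_le_sum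
    (f := fun j : Fin k => (j.1 + 1) * α j) (fun _ _ => Nat.zero_le _) (mem_univ r)
  have : r.1 + 1 ≤ (r.1 + 1) * α r := Nat.le_mul_of_pos_right _ (Nat.pos_of_ne_zero h)
  omega

theorem add_single_mem_partitions_iff {k n : ℕ} {β : Fin k → ℕ} {r : Fin k} :
    β + Pi.single r 1 ∈ partitions k (n + r + 1) ↔ β ∈ partitions k n := by
  have hsingle : ∑ j : Fin k, (j.1 + 1) * (Pi.single r 1 : Fin k → ℕ) j = r + 1 := by
    rw [Fintype.sum_eq_single r fun j hj => by simp [hj]]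
    simp
  simp only [mem_partitions, Pi.add_apply, mul_add, sum_add_distrib, hsingle]
  omega

-- Agrees with `P k 1 m` for `m ≥ 1`, but is `1` (not `0`) at `m = 0`.
noncomputable def completeIsobaric (k m : ℕ) : MvPolynomial (Fin k) ℚ :=
  ∑ α ∈ partitions k m, C (Nat.multinomial univ α : ℚ) * ∏ j, X j ^ α j

theorem multinomial_apply_div_term_add_single {k : ℕ} (β : Fin k → ℕ) (r : Fin k) :
    C ((Nat.multinomial univ (β + Pi.single r 1 : Fin k → ℕ) : ℚ) *
        (β + Pi.single r 1 : Fin k → ℕ) r / (∑ i, (β + Pi.single r 1 : Fin k → ℕ) i : ℕ)) *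
      ∏ j, X j ^ (β + Pi.single r 1 : Fin k → ℕ) j =
    X r * (C (Nat.multinomial univ β : ℚ) * ∏ j, X j ^ β j) := by
  have hmul : ((β r + 1 : ℕ) : ℚ) * Nat.multinomial univ (β + Pi.single r 1 : Fin k → ℕ) =
      ((∑ i, β i + 1 : ℕ) : ℚ) * Nat.multinomial univ β := by
    exact_mod_cast Nat.succ_mul_multinomial_add_single (mem_univ r) β
  have hcoeff : (Nat.multinomial univ (β + Pi.single r 1 : Fin k → ℕ) : ℚ) *
      (β + Pi.single r 1 : Fin k → ℕ) r / (∑ i, (β + Pi.single r 1 : Fin k → ℕ) i : ℕ) =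
      Nat.multinomial univ β := by
    have hsum : ∑ i, (β + Pi.single r 1 : Fin k → ℕ) i = ∑ i, β i + 1 := by
      simp [sum_add_distrib]
    rw [hsum, div_eq_iff (by positivity)]
    simp only [Pi.add_apply, Pi.single_eq_same] at hmul ⊢
    linear_combination hmul
  have hprod : ∏ j, (X j : MvPolynomial (Fin k) ℚ) ^ (β + Pi.single r 1 : Fin k → ℕ) j =
      X r * ∏ j, X j ^ β j := by
    have hsingle : ∏ j, (X j : MvPolynomial (Fin k) ℚ) ^ (Pi.single r 1 : Fin k → ℕ) j = X r := by
      rw [Fintype.prod_eq_single r fun j hj => by simp [hj]]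
      simp
    rw [← hsingle, ← prod_mul_distrib]
    simp only [Pi.add_apply, pow_add, mul_comm]
  rw [hcoeff, hprod]
  ring

theorem sum_partitions_mul_apply_div (k m : ℕ) (r : Fin k) :
    ∑ α ∈ partitions k (m + r + 1),
        C ((Nat.multinomial univ α : ℚ) * α r / (∑ i, α i : ℕ)) * ∏ j, X j ^ α j =
      X r * completeIsobaric k m := by
  have hsub : (partitions k m).image (· + Pi.single r 1) ⊆ partitions k (m + r + 1) :=
    image_subset_iff.mpr fun β hβ => add_single_mem_partitions_iff.mpr hβ
  have hzero : ∀ α ∈ partitions k (m + r + 1), α ∉ (partitions k m).image (· + Pi.single r 1) →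
      C ((Nat.multinomial univ α : ℚ) * α r / (∑ i, α i : ℕ)) * ∏ j, X j ^ α j = 0 := by
    intro α hα hnot
    suffices hr : α r = 0 by simp [hr]
    by_contra hr
    have hle : Pi.single r 1 ≤ α := fun j => by
      rcases eq_or_ne j r with rfl | hj <;> simp [*, Nat.one_le_iff_ne_zero]
    refine hnot (mem_image.mpr ⟨α - Pi.single r 1, ?_, tsub_add_cancel_of_le hle⟩)
    rwa [← add_single_mem_partitions_iff, tsub_add_cancel_of_le hle]
  rw [← sum_subset hsub hzero, sum_image fun β _ γ _ h => add_right_cancel h, completeIsobaric,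
    mul_sum]
  exact sum_congr rfl fun β _ => multinomial_apply_div_term_add_single β r

theorem sum_partitions_succ_mul_apply_div (k m : ℕ) (r : Fin k) :
    ∑ α ∈ partitions k (m + 1),
        C ((Nat.multinomial univ α : ℚ) * α r / (∑ i, α i : ℕ)) * ∏ j, X j ^ α j =
      if r.1 ≤ m then tQ k r * completeIsobaric k (m - r) else 0 := by
  split_ifs with hr
  · obtain ⟨d, rfl⟩ := Nat.exists_eq_add_of_le' hr
    rw [tQ, dif_pos r.2, Nat.add_sub_cancel, ← sum_partitions_mul_apply_div]
  · exact sum_eq_zero fun α hα => by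
      simp [apply_eq_zero_of_mem_partitions hα (r := r) (by omega)]

theorem Fin.sum_ite_le_eq_sum_range {M : Type*} [AddCommMonoid M] {k : ℕ} (m : ℕ) (F : ℕ → M)
    (hF : ∀ r, k ≤ r → F r = 0) :
    ∑ r : Fin k, (if r.1 ≤ m then F r else 0) = ∑ r ∈ range (m + 1), F r := by
  rw [Fin.sum_univ_eq_sum_range (fun r => if r ≤ m then F r else 0), ← sum_filter]
  refine sum_subset (fun r hr => ?_) fun r hr hnot => hF r ?_
  · simp only [mem_filter, mem_range] at hr ⊢
    omega
  · simp only [mem_filter, mem_range, not_and] at hr hnot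
    omega

theorem sum_partitions_succ_weighted (k m : ℕ) (w : ℕ → ℚ) :
    ∑ α ∈ partitions k (m + 1),
        C ((Nat.multinomial univ α : ℚ) * ((∑ i : Fin k, (α i : ℚ) * w i) / (∑ i, α i : ℕ))) *
          ∏ j, X j ^ α j =
      ∑ r ∈ range (m + 1), C (w r) * (tQ k r * completeIsobaric k (m - r)) := by
  have hsplit : ∀ α : Fin k → ℕ,
      C ((Nat.multinomial univ α : ℚ) * ((∑ i : Fin k, (α i : ℚ) * w i) / (∑ i, α i : ℕ))) *
          ∏ j, X j ^ α j =
        ∑ r : Fin k, C (w r) *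
          (C ((Nat.multinomial univ α : ℚ) * α r / (∑ i, α i : ℕ)) * ∏ j, X j ^ α j) := by
    intro α
    simp_rw [← mul_assoc, ← map_mul, ← sum_mul, ← map_sum, sum_div, mul_sum]
    congr 2
    exact sum_congr rfl fun r _ => by ring
  rw [sum_congr rfl fun α _ => hsplit α, sum_comm]
  simp_rw [← mul_sum, sum_partitions_succ_mul_apply_div, mul_ite, mul_zero]
  exact Fin.sum_ite_le_eq_sum_range m (fun r => C (w r) * (tQ k r * completeIsobaric k (m - r)))
    fun r hr => by simp [tQ, hr.not_gt]

theorem completeIsobaric_zero (k : ℕ) : completeIsobaric k 0 = 1 := by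
  have hpart : partitions k 0 = {0} := by
    ext α
    simp [mem_partitions, funext_iff]
  simp [completeIsobaric, hpart, Nat.multinomial]

theorem completeIsobaric_succ (k m : ℕ) :
    completeIsobaric k (m + 1) =
      ∑ r ∈ range (m + 1), tQ k r * completeIsobaric k (m - r) := by
  have h := sum_partitions_succ_weighted k m 1
  simp only [Pi.one_apply, mul_one, map_one, one_mul] at h
  rw [← h, completeIsobaric]
  refine sum_congr rfl fun α hα => ?_
  have hcard : (∑ i, α i : ℕ) ≠ 0 := fun h0 => by
    simp_all [mem_partitions]
  rw [← Nat.cast_sum, div_self (Nat.cast_ne_zero.mpr hcard), mul_one]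

theorem permanent_toeplitzHessenberg_tQ (k m : ℕ) :
    (toeplitzHessenberg (tQ k) (tQ k) m).permanent = completeIsobaric k m := by
  induction m using Nat.strong_induction_on with
  | _ m ih =>
    rcases m with _ | m
    · rw [Matrix.permanent_isEmpty, completeIsobaric_zero]
    · rw [permanent_toeplitzHessenberg_succ, completeIsobaric_succ]
      exact sum_congr rfl fun r _ => by rw [ih (m - r) (by omega)]

theorem perm_Hplus_eq_P_general (k n : ℕ) (hn : 1 ≤ n) (ω : ℕ → ℤ) :
    perm (Hplus k n ω) = P k ω n := by
  obtain ⟨m, rfl⟩ := Nat.exists_eq_add_of_le' hn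
  rw [perm_eq_permanent, ← Matrix.permanent_submatrix_rev, Hplus_submatrix_rev,
    permanent_toeplitzHessenberg_succ, P, sum_partitions_succ_weighted k m fun r => ω r]
  simp_rw [permanent_toeplitzHessenberg_tQ, mul_assoc]

theorem perm_Hplus_eq_P (k n : ℕ) (hk : 1 ≤ k) (hn : 1 ≤ n) (ω : ℕ → ℤ) :
    perm (Hplus k n ω) = P k ω n :=
  perm_Hplus_eq_P_general k n hn ω
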